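/- arXiv:1804.01981 — 3 statements merged into one kernel-verified Lean document; each statement's English description precedes it below -/
import Mathlib

section
/- Let (X̂_n) be a discrete-time Markov chain on ℤ^d with symmetric transition kernel p, and let (X_n^λ) be the chain with transition kernel e^{λ(p − Id)} = e^{−λ} Σ_{k≥0} (λ^k/k!) p^k. If T and T̂ denote the respective first return times to the origin, then P_0(T = ∞) ≥ (1 − e^{−λ}) P_0(T̂ = ∞). -/
open scoped ENNReal

/-- Iterated kernel (matrix power) of a kernel on `ℤ^d`. -/
noncomputable def kpow {d : ℕ} (p : (Fin d → ℤ) → (Fin d → ℤ) → ℝ≥0∞) :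
    ℕ → (Fin d → ℤ) → (Fin d → ℤ) → ℝ≥0∞
  | 0, x, y => if x = y then 1 else 0
  | n + 1, x, y => ∑' z, p x z * kpow p n z y

/-- The heat semigroup kernel `e^{λ(p − Id)} = e^{−λ} Σ_k (λ^k/k!) p^k` at time one. -/
noncomputable def heatKernel {d : ℕ} (lam : ℝ)
    (p : (Fin d → ℤ) → (Fin d → ℤ) → ℝ≥0∞) :
    (Fin d → ℤ) → (Fin d → ℤ) → ℝ≥0∞ :=
  fun x y => ∑' n : ℕ,
    ENNReal.ofReal (Real.exp (-lam) * lam ^ n / (Nat.factorial n)) * kpow p n x y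

/-- `avoidProb q n x` is the probability that the chain with kernel `q` started at `x`
avoids the origin during its next `n` steps. -/
noncomputable def avoidProb {d : ℕ} (q : (Fin d → ℤ) → (Fin d → ℤ) → ℝ≥0∞) :
    ℕ → (Fin d → ℤ) → ℝ≥0∞
  | 0, _ => 1
  | n + 1, x => ∑' y, if y = 0 then 0 else q x y * avoidProb q n y

/-- `escapeProb q = P_0(T = ∞)`: the chain started at `0` never returns to `0`. -/
noncomputable def escapeProb {d : ℕ} (q : (Fin d → ℤ) → (Fin d → ℤ) → ℝ≥0∞) : ℝ≥0∞ :=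
  ⨅ n : ℕ, avoidProb q n 0

namespace Stmt14Aux

variable {d : ℕ}

/-- Iterated kernel killed at the origin (killing at intermediate steps). -/
noncomputable def qpow (p : (Fin d → ℤ) → (Fin d → ℤ) → ℝ≥0∞) :
    ℕ → (Fin d → ℤ) → (Fin d → ℤ) → ℝ≥0∞
  | 0, x, y => if x = y then 1 else 0
  | n + 1, x, y => ∑' z, (if z = 0 then 0 else p x z) * qpow p n z y

lemma tsum_delta_mul (x : Fin d → ℤ) (f : (Fin d → ℤ) → ℝ≥0∞) :
    ∑' y, (if x = y then (1 : ℝ≥0∞) else 0) * f y = f x := by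
  rw [tsum_eq_single x]
  · simp
  · intro y hy
    simp [Ne.symm hy]

lemma avoidProb_zero (q : (Fin d → ℤ) → (Fin d → ℤ) → ℝ≥0∞) (x : Fin d → ℤ) :
    avoidProb q 0 x = 1 := rfl

lemma avoidProb_succ (q : (Fin d → ℤ) → (Fin d → ℤ) → ℝ≥0∞) (n : ℕ) (x : Fin d → ℤ) :
    avoidProb q (n + 1) x = ∑' y, if y = 0 then 0 else q x y * avoidProb q n y := rfl

lemma kpow_stoch {p : (Fin d → ℤ) → (Fin d → ℤ) → ℝ≥0∞}
    (hstoch : ∀ x, ∑' y, p x y = 1) : ∀ k x, ∑' y, kpow p k x y = 1 := by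
  intro k
  induction k with
  | zero =>
      intro x
      show ∑' y, (if x = y then (1:ℝ≥0∞) else 0) = 1
      have := tsum_delta_mul x (fun _ => (1 : ℝ≥0∞))
      simpa using this
  | succ k ih =>
      intro x
      show ∑' y, ∑' z, p x z * kpow p k z y = 1
      rw [ENNReal.tsum_comm]
      calc ∑' z, ∑' y, p x z * kpow p k z y
          = ∑' z, p x z * ∑' y, kpow p k z y := by
            refine tsum_congr fun z => ?_
            rw [ENNReal.tsum_mul_left]
        _ = ∑' z, p x z := by
            refine tsum_congr fun z => ?_
            rw [ih z, mul_one]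
        _ = 1 := hstoch x

lemma qpow_le_kpow (p : (Fin d → ℤ) → (Fin d → ℤ) → ℝ≥0∞) :
    ∀ k x y, qpow p k x y ≤ kpow p k x y := by
  intro k
  induction k with
  | zero => intro x y; exact le_rfl
  | succ k ih =>
      intro x y
      show ∑' z, (if z = 0 then 0 else p x z) * qpow p k z y
          ≤ ∑' z, p x z * kpow p k z y
      refine ENNReal.tsum_le_tsum fun z => ?_
      refine mul_le_mul' ?_ (ih z y)
      split <;> simp

lemma qpow_tsum_le_one {p : (Fin d → ℤ) → (Fin d → ℤ) → ℝ≥0∞}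
    (hstoch : ∀ x, ∑' y, p x y = 1) (k : ℕ) (x : Fin d → ℤ) :
    ∑' y, qpow p k x y ≤ 1 := by
  calc ∑' y, qpow p k x y ≤ ∑' y, kpow p k x y :=
        ENNReal.tsum_le_tsum fun y => qpow_le_kpow p k x y
    _ = 1 := kpow_stoch hstoch k x

lemma qpow_le_one {p : (Fin d → ℤ) → (Fin d → ℤ) → ℝ≥0∞}
    (hstoch : ∀ x, ∑' y, p x y = 1) (k : ℕ) (x y : Fin d → ℤ) :
    qpow p k x y ≤ 1 :=
  le_trans (ENNReal.le_tsum y) (qpow_tsum_le_one hstoch k x)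

lemma qpow_zero_right (p : (Fin d → ℤ) → (Fin d → ℤ) → ℝ≥0∞) :
    ∀ k, k ≠ 0 → ∀ x, qpow p k x 0 = 0 := by
  intro k
  induction k with
  | zero => intro h; exact absurd rfl h
  | succ k ih =>
      intro _ x
      show ∑' z, (if z = 0 then 0 else p x z) * qpow p k z 0 = 0
      rw [ENNReal.tsum_eq_zero]
      intro z
      by_cases hz : z = 0
      · simp [hz]
      · rcases Nat.eq_zero_or_pos k with hk | hk
        · subst hk
          show (if z = 0 then 0 else p x z) * (if z = 0 then (1:ℝ≥0∞) else 0) = 0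
          simp [hz]
        · rw [ih hk.ne' z, mul_zero]

lemma avoid_le_one {q : (Fin d → ℤ) → (Fin d → ℤ) → ℝ≥0∞}
    (hq : ∀ x, ∑' y, q x y ≤ 1) : ∀ n x, avoidProb q n x ≤ 1 := by
  intro n
  induction n with
  | zero => intro x; exact le_rfl
  | succ n ih =>
      intro x
      rw [avoidProb_succ]
      calc (∑' y, if y = 0 then 0 else q x y * avoidProb q n y)
          ≤ ∑' y, q x y := by
            refine ENNReal.tsum_le_tsum fun y => ?_
            by_cases hy : y = 0
            · simp [hy]
            · simp only [if_neg hy]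
              calc q x y * avoidProb q n y ≤ q x y * 1 :=
                    mul_le_mul_right (ih y) _
                _ = q x y := mul_one _
        _ ≤ 1 := hq x

lemma avoid_anti {q : (Fin d → ℤ) → (Fin d → ℤ) → ℝ≥0∞}
    (hq : ∀ x, ∑' y, q x y ≤ 1) (x : Fin d → ℤ) :
    Antitone (fun n => avoidProb q n x) := by
  have key : ∀ n x, avoidProb q (n + 1) x ≤ avoidProb q n x := by
    intro n
    induction n with
    | zero => intro x; exact avoid_le_one hq 1 x
    | succ n ih =>
        intro x
        rw [avoidProb_succ, avoidProb_succ]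
        refine ENNReal.tsum_le_tsum fun y => ?_
        by_cases hy : y = 0
        · simp [hy]
        · simp only [if_neg hy]
          exact mul_le_mul_right (ih y) _
  exact antitone_nat_of_succ_le (fun n => key n x)

lemma avoid_add (p : (Fin d → ℤ) → (Fin d → ℤ) → ℝ≥0∞) (m : ℕ) :
    ∀ k x, avoidProb p (k + m) x = ∑' y, qpow p k x y * avoidProb p m y := by
  intro k
  induction k with
  | zero =>
      intro x
      rw [Nat.zero_add]
      exact (tsum_delta_mul x (avoidProb p m)).symm
  | succ k ih =>
      intro x
      have h1 : k + 1 + m = (k + m) + 1 := by omega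
      rw [h1, avoidProb_succ]
      calc (∑' y, if y = 0 then 0 else p x y * avoidProb p (k + m) y)
          = ∑' y, (if y = 0 then 0 else p x y) * avoidProb p (k + m) y := by
            refine tsum_congr fun y => ?_
            split <;> simp
        _ = ∑' y, (if y = 0 then 0 else p x y) * ∑' z, qpow p k y z * avoidProb p m z := by
            refine tsum_congr fun y => ?_
            rw [ih y]
        _ = ∑' y, ∑' z, (if y = 0 then 0 else p x y) * (qpow p k y z * avoidProb p m z) := by
            refine tsum_congr fun y => ?_
            rw [ENNReal.tsum_mul_left]
        _ = ∑' z, ∑' y, (if y = 0 then 0 else p x y) * (qpow p k y z * avoidProb p m z) :=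
            ENNReal.tsum_comm
        _ = ∑' z, (∑' y, (if y = 0 then 0 else p x y) * qpow p k y z) * avoidProb p m z := by
            refine tsum_congr fun z => ?_
            rw [← ENNReal.tsum_mul_right]
            exact tsum_congr fun y => (mul_assoc _ _ _).symm
        _ = ∑' z, qpow p (k + 1) x z * avoidProb p m z := rfl

/-- Monotone (decreasing) convergence for `tsum` against a finite kernel. -/
lemma iInf_tsum_le (g : (Fin d → ℤ) → ℝ≥0∞) (hg : ∑' y, g y ≤ 1)
    (f : ℕ → (Fin d → ℤ) → ℝ≥0∞) (hf : ∀ y, Antitone fun m => f m y)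
    (hle : ∀ m y, f m y ≤ 1) :
    ⨅ m, ∑' y, g y * f m y ≤ ∑' y, g y * ⨅ m, f m y := by
  classical
  have hgy : ∀ y, g y ≠ ∞ := by
    intro y
    exact ne_top_of_le_ne_top (by simp) (le_trans (ENNReal.le_tsum y) hg)
  have hmeas : ∀ m, Measurable (fun y => g y * f m y) := fun m =>
    measurable_of_countable _
  have hanti : Antitone (fun m => fun y => g y * f m y) := by
    intro a b hab y
    exact mul_le_mul_right (hf y hab) _
  have h0 : (∫⁻ y, g y * f 0 y ∂MeasureTheory.Measure.count) ≠ ∞ := by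
    rw [MeasureTheory.lintegral_count]
    refine ne_top_of_le_ne_top (by simp : (1:ℝ≥0∞) ≠ ∞) (le_trans ?_ hg)
    refine ENNReal.tsum_le_tsum fun y => ?_
    calc g y * f 0 y ≤ g y * 1 := mul_le_mul_right (hle 0 y) _
      _ = g y := mul_one _
  have hlin := MeasureTheory.lintegral_iInf hmeas hanti h0
  have h1 : ∀ y, (⨅ m, g y * f m y) = g y * ⨅ m, f m y := by
    intro y
    rw [ENNReal.mul_iInf (fun h => absurd h (hgy y))]
  refine le_of_eq ?_
  calc ⨅ m, ∑' y, g y * f m y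
      = ⨅ m, ∫⁻ y, g y * f m y ∂MeasureTheory.Measure.count := by
        refine iInf_congr fun m => ?_
        rw [MeasureTheory.lintegral_count]
    _ = ∫⁻ y, ⨅ m, g y * f m y ∂MeasureTheory.Measure.count := hlin.symm
    _ = ∑' y, ⨅ m, g y * f m y := MeasureTheory.lintegral_count _
    _ = ∑' y, g y * ⨅ m, f m y := tsum_congr h1

/-- The escape probability function is superharmonic off the origin for each power of `p`. -/
lemma superharmonic {p : (Fin d → ℤ) → (Fin d → ℤ) → ℝ≥0∞}
    (hstoch : ∀ x, ∑' y, p x y = 1) (k : ℕ) (x : Fin d → ℤ)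
    (hx : k ≠ 0 ∨ x ≠ 0) :
    (⨅ m, avoidProb p m x)
      ≤ ∑' y, if y = 0 then 0 else kpow p k x y * ⨅ m, avoidProb p m y := by
  classical
  set A : (Fin d → ℤ) → ℝ≥0∞ := fun y => ⨅ m, avoidProb p m y with hA
  rcases Nat.eq_zero_or_pos k with hk | hk
  · subst hk
    have hx0 : x ≠ 0 := hx.resolve_left (fun h => h rfl)
    have : (∑' y, if y = 0 then 0 else kpow p 0 x y * A y) = A x := by
      rw [tsum_eq_single x]
      · simp only [if_neg hx0]
        show (if x = x then (1:ℝ≥0∞) else 0) * A x = A x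
        simp
      · intro y hy
        by_cases hy0 : y = 0
        · simp [hy0]
        · simp only [if_neg hy0]
          show (if x = y then (1:ℝ≥0∞) else 0) * A y = 0
          simp [Ne.symm hy]
    rw [this]
  · have hk0 : k ≠ 0 := hk.ne'
    have hp1 : ∀ x, ∑' y, p x y ≤ 1 := fun x => le_of_eq (hstoch x)
    have step1 : A x ≤ ⨅ m, avoidProb p (k + m) x :=
      le_iInf fun m => iInf_le _ (k + m)
    have step2 : (⨅ m, avoidProb p (k + m) x)
        = ⨅ m, ∑' y, qpow p k x y * avoidProb p m y := by
      refine iInf_congr fun m => ?_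
      exact avoid_add p m k x
    have step3 : (⨅ m, ∑' y, qpow p k x y * avoidProb p m y)
        ≤ ∑' y, qpow p k x y * A y := by
      refine iInf_tsum_le _ (qpow_tsum_le_one hstoch k x) _ ?_ ?_
      · intro y
        exact avoid_anti hp1 y
      · intro m y
        exact avoid_le_one hp1 m y
    have step4 : (∑' y, qpow p k x y * A y)
        ≤ ∑' y, if y = 0 then 0 else kpow p k x y * A y := by
      refine ENNReal.tsum_le_tsum fun y => ?_
      by_cases hy : y = 0
      · subst hy
        rw [qpow_zero_right p k hk0 x, zero_mul]
        simp
      · simp only [if_neg hy]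
        exact mul_le_mul_left (qpow_le_kpow p k x y) _
    exact le_trans step1 (le_trans (le_of_eq step2) (le_trans step3 step4))

/-- Expansion of a killed sum against the heat kernel into powers of `p`. -/
lemma heat_expand (lam : ℝ) (p : (Fin d → ℤ) → (Fin d → ℤ) → ℝ≥0∞)
    (A : (Fin d → ℤ) → ℝ≥0∞) (x : Fin d → ℤ) :
    (∑' y, if y = 0 then 0 else heatKernel lam p x y * A y)
      = ∑' k : ℕ, ENNReal.ofReal (Real.exp (-lam) * lam ^ k / (Nat.factorial k))
          * ∑' y, if y = 0 then 0 else kpow p k x y * A y := by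
  classical
  set c : ℕ → ℝ≥0∞ := fun k =>
    ENNReal.ofReal (Real.exp (-lam) * lam ^ k / (Nat.factorial k)) with hc
  calc (∑' y, if y = 0 then 0 else heatKernel lam p x y * A y)
      = ∑' y, ∑' k, (if y = 0 then 0 else c k * (kpow p k x y * A y)) := by
        refine tsum_congr fun y => ?_
        by_cases hy : y = 0
        · simp [hy]
        · simp only [if_neg hy]
          show (∑' k, c k * kpow p k x y) * A y = _
          rw [← ENNReal.tsum_mul_right]
          exact tsum_congr fun k => mul_assoc _ _ _
    _ = ∑' k, ∑' y, (if y = 0 then 0 else c k * (kpow p k x y * A y)) :=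
        ENNReal.tsum_comm
    _ = ∑' k, c k * ∑' y, (if y = 0 then 0 else kpow p k x y * A y) := by
        refine tsum_congr fun k => ?_
        rw [← ENNReal.tsum_mul_left]
        refine tsum_congr fun y => ?_
        split <;> simp

lemma coeff_sum (lam : ℝ) (hlam : 0 ≤ lam) :
    (∑' k : ℕ, ENNReal.ofReal (Real.exp (-lam) * lam ^ k / (Nat.factorial k))) = 1 := by
  have hnn : ∀ k : ℕ, 0 ≤ Real.exp (-lam) * lam ^ k / (Nat.factorial k) := by
    intro k
    have h1 : (0:ℝ) < Nat.factorial k := by positivity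
    have h2 : 0 ≤ lam ^ k := pow_nonneg hlam k
    positivity
  have hre : ∀ k : ℕ, Real.exp (-lam) * lam ^ k / (Nat.factorial k)
      = Real.exp (-lam) * (lam ^ k / (Nat.factorial k)) := fun k => mul_div_assoc _ _ _
  have hsum : Summable (fun k : ℕ => Real.exp (-lam) * (lam ^ k / (Nat.factorial k))) :=
    (Real.summable_pow_div_factorial lam).mul_left _
  have hsum' : Summable (fun k : ℕ => Real.exp (-lam) * lam ^ k / (Nat.factorial k)) := by
    simpa only [hre] using hsum
  rw [← ENNReal.ofReal_tsum_of_nonneg hnn hsum']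
  have : (∑' k : ℕ, Real.exp (-lam) * lam ^ k / (Nat.factorial k)) = 1 := by
    calc (∑' k : ℕ, Real.exp (-lam) * lam ^ k / (Nat.factorial k))
        = ∑' k : ℕ, Real.exp (-lam) * (lam ^ k / (Nat.factorial k)) := tsum_congr hre
      _ = Real.exp (-lam) * ∑' k : ℕ, lam ^ k / (Nat.factorial k) := tsum_mul_left
      _ = Real.exp (-lam) * Real.exp lam := by
          rw [Real.exp_eq_exp_ℝ, NormedSpace.exp_eq_tsum_div]
      _ = 1 := by rw [Real.exp_neg]; exact inv_mul_cancel₀ (Real.exp_ne_zero lam)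
  rw [this, ENNReal.ofReal_one]

lemma coeff_tail (lam : ℝ) (hlam : 0 ≤ lam) :
    (∑' k : ℕ, ENNReal.ofReal (Real.exp (-lam) * lam ^ (k+1) / (Nat.factorial (k+1))))
      = 1 - ENNReal.ofReal (Real.exp (-lam)) := by
  set c : ℕ → ℝ≥0∞ := fun k =>
    ENNReal.ofReal (Real.exp (-lam) * lam ^ k / (Nat.factorial k)) with hc
  have h0 : c 0 = ENNReal.ofReal (Real.exp (-lam)) := by
    simp [hc, Nat.factorial]
  have hsplit : (∑' k, c k) = c 0 + ∑' k, c (k+1) :=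
    tsum_eq_zero_add' ENNReal.summable
  rw [coeff_sum lam hlam] at hsplit
  have hfin : c 0 ≠ ∞ := ENNReal.ofReal_ne_top
  have : (∑' k, c (k+1)) = 1 - c 0 :=
    ENNReal.eq_sub_of_add_eq hfin (by rw [add_comm]; exact hsplit.symm)
  rw [← h0]
  exact this

lemma heat_stoch {p : (Fin d → ℤ) → (Fin d → ℤ) → ℝ≥0∞}
    (hstoch : ∀ x, ∑' y, p x y = 1) (lam : ℝ) (hlam : 0 ≤ lam) (x : Fin d → ℤ) :
    ∑' y, heatKernel lam p x y = 1 := by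
  calc ∑' y, heatKernel lam p x y
      = ∑' y, ∑' k : ℕ, ENNReal.ofReal (Real.exp (-lam) * lam ^ k / (Nat.factorial k))
          * kpow p k x y := rfl
    _ = ∑' k : ℕ, ∑' y, ENNReal.ofReal (Real.exp (-lam) * lam ^ k / (Nat.factorial k))
          * kpow p k x y := ENNReal.tsum_comm
    _ = ∑' k : ℕ, ENNReal.ofReal (Real.exp (-lam) * lam ^ k / (Nat.factorial k)) := by
        refine tsum_congr fun k => ?_
        rw [ENNReal.tsum_mul_left, kpow_stoch hstoch k x, mul_one]
    _ = 1 := coeff_sum lam hlam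

end Stmt14Aux

/-- If `p` is a symmetric stochastic kernel on `ℤ^d` and `X^λ` is the chain with kernel
`e^{λ(p−Id)}`, then the first-return times to the origin satisfy
`P_0(T = ∞) ≥ (1 − e^{−λ}) P_0(T̂ = ∞)`. -/
theorem stmt14 {d : ℕ} (p : (Fin d → ℤ) → (Fin d → ℤ) → ℝ≥0∞)
    (hsymm : ∀ x y, p x y = p y x)
    (hstoch : ∀ x, ∑' y, p x y = 1)
    (lam : ℝ) (hlam : 0 < lam) :
    (1 - ENNReal.ofReal (Real.exp (-lam))) * escapeProb p
      ≤ escapeProb (heatKernel lam p) := by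
  classical
  have hlam' : (0:ℝ) ≤ lam := hlam.le
  set A : (Fin d → ℤ) → ℝ≥0∞ := fun y => ⨅ m, avoidProb p m y with hA
  set c : ℕ → ℝ≥0∞ := fun k =>
    ENNReal.ofReal (Real.exp (-lam) * lam ^ k / (Nat.factorial k)) with hc
  have hc0 : c 0 = ENNReal.ofReal (Real.exp (-lam)) := by
    simp [hc, Nat.factorial]
  have hA1 : ∀ x, A x ≤ 1 := fun x => iInf_le (fun m => avoidProb p m x) 0
  -- the key lower bound step, for arbitrary starting point x
  have key : ∀ (n : ℕ) (x : Fin d → ℤ),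
      (∀ y : Fin d → ℤ, y ≠ 0 → A y ≤ avoidProb (heatKernel lam p) n y) →
      (∑' k, c k * ∑' y, (if y = 0 then 0 else kpow p k x y * A y))
        ≤ avoidProb (heatKernel lam p) (n + 1) x := by
    intro n x ih
    rw [Stmt14Aux.avoidProb_succ]
    have step1 : (∑' y, if y = 0 then 0 else heatKernel lam p x y * A y)
        ≤ ∑' y, if y = 0 then 0 else heatKernel lam p x y
            * avoidProb (heatKernel lam p) n y := by
      refine ENNReal.tsum_le_tsum fun y => ?_
      by_cases hy : y = 0
      · simp [hy]
      · simp only [if_neg hy]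
        exact mul_le_mul_right (ih y hy) _
    refine le_trans ?_ step1
    rw [Stmt14Aux.heat_expand lam p A x]
  -- claim (a): starting off the origin
  have claimA : ∀ (n : ℕ) (x : Fin d → ℤ), x ≠ 0 →
      A x ≤ avoidProb (heatKernel lam p) n x := by
    intro n
    induction n with
    | zero => intro x _; exact hA1 x
    | succ n ih =>
        intro x hx
        refine le_trans ?_ (key n x ih)
        have hterm : ∀ k : ℕ, c k * A x
            ≤ c k * ∑' y, (if y = 0 then 0 else kpow p k x y * A y) := fun k =>
          mul_le_mul_right (Stmt14Aux.superharmonic hstoch k x (Or.inr hx)) _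
        calc A x = 1 * A x := (one_mul _).symm
          _ = (∑' k, c k) * A x := by rw [Stmt14Aux.coeff_sum lam hlam']
          _ = ∑' k, c k * A x := ENNReal.tsum_mul_right.symm
          _ ≤ _ := ENNReal.tsum_le_tsum hterm
  -- claim (b): starting at the origin
  have claimB : ∀ n : ℕ, (1 - c 0) * A 0 ≤ avoidProb (heatKernel lam p) n 0 := by
    intro n
    cases n with
    | zero =>
        rw [Stmt14Aux.avoidProb_zero]
        exact mul_le_one' tsub_le_self (hA1 0)
    | succ n =>
        refine le_trans ?_ (key n 0 (fun y hy => claimA n y hy))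
        have hterm : ∀ k : ℕ, (if k = 0 then 0 else c k * A 0)
            ≤ c k * ∑' y, (if y = 0 then 0 else kpow p k 0 y * A y) := by
          intro k
          by_cases hk : k = 0
          · simp [hk]
          · simp only [if_neg hk]
            exact mul_le_mul_right (Stmt14Aux.superharmonic hstoch k 0 (Or.inl hk)) _
        refine le_trans (le_of_eq ?_) (ENNReal.tsum_le_tsum hterm)
        calc (1 - c 0) * A 0
            = (∑' k, c (k + 1)) * A 0 := by rw [Stmt14Aux.coeff_tail lam hlam', hc0]
          _ = ∑' k, c (k + 1) * A 0 := ENNReal.tsum_mul_right.symm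
          _ = ∑' k, (if k = 0 then (0:ℝ≥0∞) else c k * A 0) := by
              rw [tsum_eq_zero_add' (f := fun k => if k = 0 then (0:ℝ≥0∞) else c k * A 0)
                ENNReal.summable]
              simp
  have hgoal : (1 - c 0) * A 0 ≤ escapeProb (heatKernel lam p) :=
    le_iInf claimB
  rw [hc0] at hgoal
  exact hgoal
end

section
/- Let p₁, p₂ be symmetric stochastic kernels on a countable set V and λ₁, λ₂ > 0, t₁ ≤ t₂. If U² := (e^{(t₂−t₁)λ₂(p₂−Id)})^{⊗n} and f : V^n → ℝ is bounded, symmetric, and positive semidefinite in each pair of variables, then U² f is again positive semidefinite in each pair of variables. -/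
open scoped Classical

/-- A bounded symmetric function `f : V^n → ℝ` is positive semidefinite in each pair of
variables (in the sense of Liggett) if for each pair of coordinate indices `i ≠ j`, every
fixed choice of the other coordinates and every finitely supported `β : V → ℝ`, the
quadratic form `Σ_{x,y} β(x)β(y) f(…,x,…,y,…)` is nonnegative. -/
def IsPSDPairwise {V : Type*} {n : ℕ} (f : (Fin n → V) → ℝ) : Prop :=
  ∀ i j : Fin n, i ≠ j → ∀ (z : Fin n → V) (β : V →₀ ℝ),
    0 ≤ ∑ x ∈ β.support, ∑ y ∈ β.support,
      β x * β y * f (Function.update (Function.update z i x) j y)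

/-- Iterated kernel (matrix power) of a real kernel on `V`. -/
noncomputable def kpowR {V : Type*} (p : V → V → ℝ) : ℕ → V → V → ℝ
  | 0, x, y => if x = y then 1 else 0
  | n + 1, x, y => ∑' z, p x z * kpowR p n z y

/-!
Fix coordinates `i ≠ j`, values `z` of the other coordinates and weights `β`. Because `q` is
stochastic and `f` is bounded, all series converge absolutely, and expanding the kernel
`∏ k, q (x k) (y k)` turns the quadratic form of `U f` into
`∑ v, C v * ∑ a b, γ a * γ b * f (v; a, b)`, where `γ = ∑ x, β x • q x` is `β` pushed through `q`
in the two active coordinates and `C v ≥ 0` is the kernel weight of the remaining coordinates.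
Each inner sum is a quadratic form of `f` in the pair `(i, j)`, now with summable rather than
finitely supported weights, hence a limit of nonnegative finite forms. The kernel
`q = ∑ k, Poisson(μ)(k) • p₂ᵏ` is stochastic as a Poisson mixture of powers of `p₂`.
-/

open Finset Function

structure IsStochasticKernel {α β : Type*} (K : α → β → ℝ) : Prop where
  nonneg : ∀ x y, 0 ≤ K x y
  hasSum : ∀ x, HasSum (K x) 1

namespace IsStochasticKernel

variable {α β γ : Type*} {K : α → β → ℝ}

lemma of_tsum_eq_one (h0 : ∀ x y, 0 ≤ K x y) (h1 : ∀ x, ∑' y, K x y = 1) :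
    IsStochasticKernel K where
  nonneg := h0
  hasSum x := by
    have hs : Summable (K x) := by
      by_contra hs
      simpa [tsum_eq_zero_of_not_summable hs] using h1 x
    simpa [h1 x] using hs.hasSum

lemma hasSum_tsum_mul (hK : IsStochasticKernel K) {a : α → ℝ} (ha0 : ∀ z, 0 ≤ a z) {s : ℝ}
    (ha : HasSum a s) : HasSum (fun y => ∑' z, a z * K z y) s := by
  set F : α × β → ℝ := fun p => a p.1 * K p.1 p.2
  have hrow : ∀ z, HasSum (fun y => F (z, y)) (a z) := fun z => by
    simpa [F] using (hK.hasSum z).mul_left (a z)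
  have hF : Summable F := summable_prod_of_nonneg (fun p => mul_nonneg (ha0 _) (hK.nonneg _ _))
    |>.mpr ⟨fun z => (hrow z).summable, ha.summable.congr fun z => (hrow z).tsum_eq.symm⟩
  have hFs : HasSum F s := (hF.hasSum.prod_fiberwise hrow).unique ha ▸ hF.hasSum
  have hswap : HasSum (F ∘ Equiv.prodComm β α) s := (Equiv.prodComm β α).hasSum_iff.mpr hFs
  exact hswap.prod_fiberwise fun y => (hswap.summable.prod_factor y).hasSum

lemma comp {L : β → γ → ℝ} (hK : IsStochasticKernel K) (hL : IsStochasticKernel L) :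
    IsStochasticKernel fun x z => ∑' y, K x y * L y z where
  nonneg x z := tsum_nonneg fun y => mul_nonneg (hK.nonneg x y) (hL.nonneg y z)
  hasSum x := hL.hasSum_tsum_mul (hK.nonneg x) (hK.hasSum x)

lemma mixture {ι : Type*} {K : ι → α → β → ℝ} (hK : ∀ k, IsStochasticKernel (K k)) {c : ι → ℝ}
    (hc0 : ∀ k, 0 ≤ c k) (hc : HasSum c 1) :
    IsStochasticKernel fun x y => ∑' k, c k * K k x y where
  nonneg x y := tsum_nonneg fun k => mul_nonneg (hc0 k) ((hK k).nonneg x y)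
  hasSum x := IsStochasticKernel.hasSum_tsum_mul (K := fun k y => K k x y)
    ⟨fun k => (hK k).nonneg x, fun k => (hK k).hasSum x⟩ hc0 hc

lemma pi {n : ℕ} {K : Fin n → α → β → ℝ} (hK : ∀ k, IsStochasticKernel (K k)) :
    IsStochasticKernel fun (x : Fin n → α) (y : Fin n → β) => ∏ k, K k (x k) (y k) := by
  induction n with
  | zero => exact ⟨fun _ _ => by simp, fun _ => by simp⟩
  | succ n ih =>
    have htail := ih (K := fun k => K k.succ) fun k => hK k.succ
    refine ⟨fun x y => prod_nonneg fun k _ => (hK k).nonneg _ _, fun x => ?_⟩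
    have hhead := (hK 0).hasSum (x 0)
    have hs : Summable fun p : β × (Fin n → β) =>
        K 0 (x 0) p.1 * ∏ k : Fin n, K k.succ (Fin.tail x k) (p.2 k) :=
      Summable.mul_of_nonneg (f := K 0 (x 0))
        (g := fun y : Fin n → β => ∏ k : Fin n, K k.succ (Fin.tail x k) (y k))
        hhead.summable (htail.hasSum (Fin.tail x)).summable ((hK 0).nonneg (x 0))
        (htail.nonneg (Fin.tail x))
    have hprod := hhead.mul (htail.hasSum (Fin.tail x)) hs
    rw [mul_one] at hprod
    rw [← (Fin.consEquiv fun _ => β).hasSum_iff]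
    refine hprod.congr_fun fun y => ?_
    rw [Function.comp_apply, Fin.prod_univ_succ]
    rfl

lemma summable_mul_of_abs_le (hK : IsStochasticKernel K) {f : β → ℝ} {B : ℝ}
    (hfB : ∀ y, |f y| ≤ B) (x : α) :
    Summable fun y => K x y * f y :=
  ((hK.hasSum x).summable.mul_right B).of_norm_bounded fun y => by
    rw [Real.norm_eq_abs, abs_mul, abs_of_nonneg (hK.nonneg x y)]
    exact mul_le_mul_of_nonneg_left (hfB y) (hK.nonneg x y)

end IsStochasticKernel

lemma isStochasticKernel_kpowR {α : Type*} {p : α → α → ℝ} (hp : IsStochasticKernel p) :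
    ∀ k, IsStochasticKernel (kpowR p k)
  | 0 => ⟨fun x y => by by_cases h : x = y <;> simp [kpowR, h],
      fun x => by simpa [kpowR, eq_comm] using hasSum_ite_eq x (1 : ℝ)⟩
  | k + 1 => hp.comp (isStochasticKernel_kpowR hp k)

section QuadraticForm

variable {V : Type*}

lemma sum_support_quadForm_eq_of_subset {β : V →₀ ℝ} {s : Finset V} (hs : β.support ⊆ s)
    (F : V → V → ℝ) :
    ∑ x ∈ β.support, ∑ y ∈ β.support, β x * β y * F x y
      = ∑ x ∈ s, ∑ y ∈ s, β x * β y * F x y := by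
  have hzero : ∀ x ∉ β.support, β x = 0 := fun x hx => Finsupp.notMem_support_iff.mp hx
  rw [Finset.sum_subset hs fun x _ hx => by simp [hzero x hx]]
  exact Finset.sum_congr rfl fun x _ =>
    Finset.sum_subset hs fun y _ hy => by simp [hzero y hy]

lemma tsum_quadForm_nonneg {F : V → V → ℝ} {B : ℝ} (hFB : ∀ a b, |F a b| ≤ B)
    (hF : ∀ β : V →₀ ℝ, 0 ≤ ∑ x ∈ β.support, ∑ y ∈ β.support, β x * β y * F x y)
    {γ : V → ℝ} (hγ : Summable γ) :
    0 ≤ ∑' p : V × V, γ p.1 * γ p.2 * F p.1 p.2 := by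
  have hsum : Summable fun p : V × V => γ p.1 * γ p.2 * F p.1 p.2 :=
    ((hγ.abs.mul_of_nonneg hγ.abs (fun _ => abs_nonneg _) fun _ => abs_nonneg _).mul_right B)
      |>.of_norm_bounded fun p => by
        rw [Real.norm_eq_abs, abs_mul, abs_mul]
        exact mul_le_mul_of_nonneg_left (hFB _ _) (by positivity)
  have hsquares : Filter.Tendsto (fun s : Finset V => s ×ˢ s) Filter.atTop Filter.atTop :=
    Filter.tendsto_atTop_finset_of_monotone (fun s t hst => Finset.product_subset_product hst hst)
      fun p => ⟨{p.1, p.2}, by simp⟩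
  refine ge_of_tendsto (hsum.hasSum.comp hsquares) (Filter.Eventually.of_forall fun s => ?_)
  have hβ := hF (Finsupp.indicator s fun a _ => γ a)
  rw [sum_support_quadForm_eq_of_subset (Finsupp.support_indicator_subset _ _)] at hβ
  simpa [Finset.sum_product, Finsupp.indicator_of_mem] using hβ

end QuadraticForm

section PairSplit

variable {V : Type*} {n : ℕ} {i j : Fin n}

def piSplitAtPair (hij : i ≠ j) : (Fin n → V) ≃ ({k // k ≠ i ∧ k ≠ j} → V) × V × V where
  toFun u := (fun k => u k, u i, u j)
  invFun p k := if hi : k = i then p.2.1 else if hj : k = j then p.2.2 else p.1 ⟨k, hi, hj⟩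
  left_inv u := by
    funext k
    by_cases hi : k = i
    · simp [hi]
    · by_cases hj : k = j
      · subst hj; simp [hi]
      · simp [hi, hj]
  right_inv p := by
    ext k
    · simp [k.2.1, k.2.2]
    · simp
    · simp [hij.symm]

variable (hij : i ≠ j) (v : {k // k ≠ i ∧ k ≠ j} → V) (a b : V)

@[simp]
lemma piSplitAtPair_symm_apply_left : (piSplitAtPair hij).symm (v, a, b) i = a := by
  simp [piSplitAtPair]

@[simp]
lemma piSplitAtPair_symm_apply_right : (piSplitAtPair hij).symm (v, a, b) j = b := by
  simp [piSplitAtPair, hij.symm]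

lemma piSplitAtPair_symm_apply_of_ne {k : Fin n} (hi : k ≠ i) (hj : k ≠ j) :
    (piSplitAtPair hij).symm (v, a, b) k = v ⟨k, hi, hj⟩ := by
  simp [piSplitAtPair, hi, hj]

lemma update_update_piSplitAtPair_symm (a₀ b₀ : V) :
    update (update ((piSplitAtPair hij).symm (v, a₀, b₀)) i a) j b
      = (piSplitAtPair hij).symm (v, a, b) := by
  funext k
  by_cases hj : k = j
  · subst hj; simp
  · by_cases hi : k = i
    · subst hi; simp [hj]
    · simp [update_of_ne hi, update_of_ne hj, piSplitAtPair_symm_apply_of_ne hij v _ _ hi hj]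

end PairSplit

lemma prod_update_update {ι V W M : Type*} [Fintype ι] [DecidableEq ι] [CommMonoid M]
    {i j : ι} (hij : i ≠ j) (g : V → W → M) (z : ι → V) (u : ι → W) (x y : V) :
    ∏ k, g (update (update z i x) j y k) (u k)
      = g x (u i) * g y (u j) * ∏ k ∈ {i, j}ᶜ, g (z k) (u k) := by
  rw [← prod_mul_prod_compl {i, j}, prod_pair hij]
  congr 1
  · simp [update_of_ne hij]
  · refine prod_congr rfl fun k hk => ?_
    simp only [mem_compl, mem_insert, mem_singleton, not_or] at hk
    rw [update_of_ne hk.2, update_of_ne hk.1]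

section TensorKernel

variable {V : Type*} {n : ℕ} {q : V → V → ℝ} {f : (Fin n → V) → ℝ} {B : ℝ}

lemma hasSum_quadForm_tensor_kernel (hq : IsStochasticKernel q) (hfB : ∀ x, |f x| ≤ B)
    {i j : Fin n} (hij : i ≠ j) (z : Fin n → V) (s : Finset V) (β : V → ℝ) :
    HasSum (fun u => (∑ x ∈ s, β x * q x (u i)) * (∑ y ∈ s, β y * q y (u j)) *
        ((∏ k ∈ {i, j}ᶜ, q (z k) (u k)) * f u))
      (∑ x ∈ s, ∑ y ∈ s,
        β x * β y * ∑' u, (∏ k, q (update (update z i x) j y k) (u k)) * f u) := by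
  have hpi := IsStochasticKernel.pi fun _ : Fin n => hq
  refine (hasSum_sum fun x _ => hasSum_sum fun y _ =>
    ((hpi.summable_mul_of_abs_le hfB _).hasSum.mul_left (β x * β y))).congr_fun fun u => ?_
  rw [Finset.sum_mul_sum, Finset.sum_mul]
  refine sum_congr rfl fun x _ => ?_
  rw [Finset.sum_mul]
  refine sum_congr rfl fun y _ => ?_
  rw [prod_update_update hij]
  ring

theorem IsPSDPairwise.tensor_kernel (hq : IsStochasticKernel q) (hfB : ∀ x, |f x| ≤ B)
    (hf : IsPSDPairwise f) : IsPSDPairwise fun x => ∑' y, (∏ k, q (x k) (y k)) * f y := by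
  intro i j hij z β
  beta_reduce
  set γ : V → ℝ := fun a => ∑ x ∈ β.support, β x * q x a
  set C : (Fin n → V) → ℝ := fun u => ∏ k ∈ {i, j}ᶜ, q (z k) (u k)
  have hS := hasSum_quadForm_tensor_kernel hq hfB hij z β.support β
  set G : (Fin n → V) → ℝ := fun u => γ (u i) * γ (u j) * (C u * f u)
  set e := (piSplitAtPair hij).symm
  rw [← hS.tsum_eq, ← e.tsum_eq,
    Summable.tsum_prod (f := fun p => G (e p)) (e.summable_iff.mpr hS.summable)]
  refine tsum_nonneg fun v => ?_
  set w := e (v, z i, z j)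
  have hC : ∀ a b, C (e (v, a, b)) = C w := fun a b => prod_congr rfl fun k hk => by
    simp only [mem_compl, mem_insert, mem_singleton, not_or] at hk
    simp only [w, e, piSplitAtPair_symm_apply_of_ne hij v _ _ hk.1 hk.2]
  have hsplit :
      ∑' ab : V × V, γ (e (v, ab) i) * γ (e (v, ab) j) * (C (e (v, ab)) * f (e (v, ab)))
        = C w * ∑' ab : V × V, γ ab.1 * γ ab.2 * f (update (update w i ab.1) j ab.2) := by
    rw [← tsum_mul_left]
    refine tsum_congr fun ⟨a, b⟩ => ?_
    simp only [e, w, piSplitAtPair_symm_apply_left, piSplitAtPair_symm_apply_right, hC,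
      update_update_piSplitAtPair_symm]
    ring
  rw [hsplit]
  exact mul_nonneg (prod_nonneg fun k _ => hq.nonneg _ _) <| tsum_quadForm_nonneg
    (fun a b => hfB _) (hf i j hij w) (summable_sum fun x _ => (hq.hasSum x).summable.mul_left _)

end TensorKernel

theorem stmt16_general {V : Type*} (n : ℕ)
    (p₂ : V → V → ℝ)
    (hp₂nonneg : ∀ x y, 0 ≤ p₂ x y)
    (hp₂stoch : ∀ x, ∑' y, p₂ x y = 1)
    (lam t₁ t₂ : ℝ) (hlam : 0 < lam) (ht : t₁ ≤ t₂)
    (q : V → V → ℝ)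
    (hq : ∀ x y, q x y = ∑' k : ℕ,
      Real.exp (-((t₂ - t₁) * lam)) * ((t₂ - t₁) * lam) ^ k / (Nat.factorial k)
        * kpowR p₂ k x y)
    (f : (Fin n → V) → ℝ) (B : ℝ) (hfB : ∀ x, |f x| ≤ B)
    (hfpsd : IsPSDPairwise f)
    (Uf : (Fin n → V) → ℝ)
    (hUf : ∀ x, Uf x = ∑' y : Fin n → V, (∏ i, q (x i) (y i)) * f y) :
    IsPSDPairwise Uf := by
  have hp₂ : IsStochasticKernel p₂ := .of_tsum_eq_one hp₂nonneg hp₂stoch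
  have hμ : 0 ≤ (t₂ - t₁) * lam := mul_nonneg (sub_nonneg.mpr ht) hlam.le
  have hpoisson := ProbabilityTheory.hasSum_one_poissonMeasure ⟨(t₂ - t₁) * lam, hμ⟩
  have hq' : IsStochasticKernel q := by
    rw [funext₂ hq]
    exact .mixture (isStochasticKernel_kpowR hp₂) (fun k => by positivity) hpoisson
  obtain rfl : Uf = _ := funext hUf
  exact hfpsd.tensor_kernel hq' hfB

/-- Let `p₂` be a symmetric stochastic kernel on a countable set `V`, `λ₂ > 0`, `t₁ ≤ t₂`,
and let `q = e^{(t₂−t₁)λ₂(p₂−Id)}` be the corresponding heat kernel.  If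
`f : V^n → ℝ` is bounded, symmetric, and positive semidefinite in each pair of variables,
then so is `U² f` where `U² = q^{⊗n}` acts coordinatewise. -/
theorem stmt16 {V : Type*} [Countable V] (n : ℕ)
    (p₂ : V → V → ℝ)
    (hp₂nonneg : ∀ x y, 0 ≤ p₂ x y)
    (hp₂symm : ∀ x y, p₂ x y = p₂ y x)
    (hp₂stoch : ∀ x, ∑' y, p₂ x y = 1)
    (lam t₁ t₂ : ℝ) (hlam : 0 < lam) (ht : t₁ ≤ t₂)
    (q : V → V → ℝ)
    (hq : ∀ x y, q x y = ∑' k : ℕ,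
      Real.exp (-((t₂ - t₁) * lam)) * ((t₂ - t₁) * lam) ^ k / (Nat.factorial k)
        * kpowR p₂ k x y)
    (f : (Fin n → V) → ℝ) (B : ℝ) (hfB : ∀ x, |f x| ≤ B)
    (hfsym : ∀ (e : Equiv.Perm (Fin n)) (x : Fin n → V), f (x ∘ e) = f x)
    (hfpsd : IsPSDPairwise f)
    (Uf : (Fin n → V) → ℝ)
    (hUf : ∀ x, Uf x = ∑' y : Fin n → V, (∏ i, q (x i) (y i)) * f y) :
    IsPSDPairwise Uf :=
  stmt16_general n p₂ hp₂nonneg hp₂stoch lam t₁ t₂ hlam ht q hq f B hfB hfpsd Uf hUf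
end

section
/- Let τ_n = s_n ∘ ⋯ ∘ s_1 with s_i i.i.d. permutations of ℤ^d. The forward orbit of the origin, O⃗_n := ⋃_{0≤j≤n} τ_j({0}), equals the range {Y_0, Y_1, …, Y_n} of the Markov chain Y_j := τ_j(0); consequently |O⃗_n| ≤ n + 1, and if Y is a chain with return probability P_0(Y_{2k} = 0) ≥ c k^{−d/2} for all k, then for every ε > 0 one has P(|O⃗_n| ≤ εn) ≥ e^{−εn} for n large enough. -/
/-
Put `l = 2k`. Fixing the path of `Y` during a block of times is an intersection of events about
the steps of that block only, so by independence and stationarity of the steps (summing over the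
countably many paths) `Y` is a Markov chain. Hence returning to the origin at each of the times
`l, 2l, …, Nl` has probability exactly `P(Y_l = 0)^N`, which the heat-kernel bound makes at least
`(c k^{-d/2})^N`. Choosing `k` with `c k^{-d/2} ≥ e^{-εk}` (possible since
`log k = o(k)`) and `N ≈ m / l`, this is at least `e^{-εm}`. On that event the chain never leaves
the `ℓ¹`-ball of radius `lM` before time `m` (steps have length at most `M`), so its range has at
most as many points as that ball, a constant, hence at most `εm` for `m` large.
-/

open MeasureTheory ProbabilityTheory Filter

def dist1 {d : ℕ} (x y : Fin d → ℤ) : ℕ := ∑ i, (x i - y i).natAbs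

lemma dist1_triangle {d : ℕ} (x y z : Fin d → ℤ) : dist1 x z ≤ dist1 x y + dist1 y z := by
  rw [dist1, dist1, dist1, ← Finset.sum_add_distrib]
  exact Finset.sum_le_sum fun i _ => by omega

lemma finite_setOf_dist1_le {d : ℕ} (x : Fin d → ℤ) (R : ℕ) : {y | dist1 x y ≤ R}.Finite := by
  refine (Set.Finite.pi fun i => Set.finite_Icc (x i - R) (x i + R)).subset fun y hy i _ => ?_
  have : (x i - y i).natAbs ≤ R :=
    (Finset.single_le_sum (fun j _ => Nat.zero_le _) (Finset.mem_univ i)).trans hy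
  simp only [Set.mem_Icc]
  omega

lemma setOf_exists_le_eq_image {α : Type*} (f : ℕ → α) (m : ℕ) :
    {x | ∃ j ≤ m, x = f j} = f '' Set.Iic m := by
  ext x
  simp only [Set.mem_ofPred_eq, Set.mem_image, Set.mem_Iic, eq_comm]

lemma ncard_setOf_exists_le_le {α : Type*} (f : ℕ → α) (m : ℕ) :
    {x | ∃ j ≤ m, x = f j}.ncard ≤ m + 1 := by
  rw [setOf_exists_le_eq_image, ← Finset.coe_Iic, ← Nat.card_Iic, ← Set.ncard_coe_finset]
  exact Set.ncard_image_le (Finset.finite_toSet _)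

lemma exists_exp_neg_mul_le_mul_rpow (d : ℕ) {c ε : ℝ} (hc : 0 < c) (hε : 0 < ε) :
    ∃ k : ℕ, 1 ≤ k ∧ Real.exp (-ε * k) ≤ c * (k : ℝ) ^ (-(d : ℝ) / 2) := by
  have hlog : ∀ᶠ x : ℝ in atTop, Real.log x ≤ ε / (d + 1) * x := by
    filter_upwards [Real.isLittleO_log_id_atTop.bound (by positivity : 0 < ε / (d + 1)),
      eventually_ge_atTop 0] with x hx hx0
    simpa [abs_of_nonneg hx0] using (le_abs_self _).trans hx
  have hconst : ∀ᶠ x : ℝ in atTop, -Real.log c ≤ ε / 2 * x :=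
    (tendsto_id.const_mul_atTop (half_pos hε)).eventually_ge_atTop _
  obtain ⟨k, hk1, hklog, hkc⟩ := ((eventually_ge_atTop 1).and
    (tendsto_natCast_atTop_atTop.eventually (hlog.and hconst))).exists
  refine ⟨k, hk1, ?_⟩
  have hk : (0 : ℝ) < k := by exact_mod_cast hk1
  rw [Real.rpow_def_of_pos hk, ← Real.exp_log hc, ← Real.exp_add]
  refine Real.exp_le_exp.2 ?_
  have : (d : ℝ) / 2 * Real.log k ≤ ε / 2 * k :=
    calc (d : ℝ) / 2 * Real.log k ≤ d / 2 * (ε / (d + 1) * k) := by gcongr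
      _ = ε / 2 * k * (d / (d + 1)) := by ring
      _ ≤ ε / 2 * k :=
        mul_le_of_le_one_right (by positivity) ((div_le_one (by positivity)).2 (by linarith))
  linarith

lemma ProbabilityTheory.iIndepFun.measure_biInter_preimage_inter {Ω ι : Type*}
    {_ : MeasurableSpace Ω} {μ : Measure Ω} {β : ι → Type*} {m : ∀ i, MeasurableSpace (β i)}
    {f : ∀ i, Ω → β i} (hf : iIndepFun f μ) {F G : Finset ι} (hFG : Disjoint F G)
    {A B : ∀ i, Set (β i)} (hA : ∀ i ∈ F, MeasurableSet (A i))
    (hB : ∀ i ∈ G, MeasurableSet (B i)) :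
    μ ((⋂ i ∈ F, f i ⁻¹' A i) ∩ ⋂ i ∈ G, f i ⁻¹' B i) =
      μ (⋂ i ∈ F, f i ⁻¹' A i) * μ (⋂ i ∈ G, f i ⁻¹' B i) := by
  classical
  have hF : ∀ i ∈ F, F.piecewise A B i = A i := fun i hi => F.piecewise_eq_of_mem A B hi
  have hG : ∀ i ∈ G, F.piecewise A B i = B i :=
    fun i hi => F.piecewise_eq_of_notMem A B (Finset.disjoint_right.1 hFG hi)
  have hC : ∀ i ∈ F ∪ G, MeasurableSet (F.piecewise A B i) := by
    intro i hi
    rcases Finset.mem_union.1 hi with hi | hi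
    · exact hF i hi ▸ hA i hi
    · exact hG i hi ▸ hB i hi
  have key := hf.measure_inter_preimage_eq_mul (F ∪ G) hC
  rw [Finset.set_biInter_inter, Finset.prod_union hFG,
    ← hf.measure_inter_preimage_eq_mul F fun i hi => hC i (Finset.mem_union_left G hi),
    ← hf.measure_inter_preimage_eq_mul G fun i hi => hC i (Finset.mem_union_right F hi)] at key
  have eF : ⋂ i ∈ F, f i ⁻¹' F.piecewise A B i = ⋂ i ∈ F, f i ⁻¹' A i :=
    Set.iInter₂_congr fun i hi => by rw [hF i hi]
  have eG : ⋂ i ∈ G, f i ⁻¹' F.piecewise A B i = ⋂ i ∈ G, f i ⁻¹' B i :=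
    Set.iInter₂_congr fun i hi => by rw [hG i hi]
  rwa [eF, eG] at key

lemma measure_preimage_inter_eq_tsum {Ω β : Type*} [MeasurableSpace Ω] {μ : Measure Ω}
    [MeasurableSpace β] [Countable β] [MeasurableSingletonClass β] {f : Ω → β}
    (hf : Measurable f) (S : Set β) (E : Set Ω) :
    μ (f ⁻¹' S ∩ E) = ∑' b : S, μ (f ⁻¹' {b.1} ∩ E) := by
  rw [← Measure.restrict_apply (hf S.to_countable.measurableSet),
    ← tsum_measure_preimage_singleton S.to_countable fun b _ => hf (measurableSet_singleton b)]
  simp only [Measure.restrict_apply (hf (measurableSet_singleton _))]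

section PermutationWalk

variable {d : ℕ} {Ω : Type*} {s τ : ℕ → Ω → Equiv.Perm (Fin d → ℤ)}

def pathEvent (s : ℕ → Ω → Equiv.Perm (Fin d → ℤ)) (a n : ℕ) (γ : ℕ → Fin d → ℤ) : Set Ω :=
  ⋂ i ∈ Finset.Ico a (a + n), s (i + 1) ⁻¹' {p | p (γ i) = γ (i + 1)}

def traj (τ : ℕ → Ω → Equiv.Perm (Fin d → ℤ)) (a n : ℕ) (ω : Ω) : Fin (n + 1) → Fin d → ℤ :=
  fun j => τ (a + j) ω 0

def returnEvent (τ : ℕ → Ω → Equiv.Perm (Fin d → ℤ)) (l N : ℕ) : Set Ω :=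
  {ω | ∀ i ≤ N, τ (l * i) ω 0 = 0}

lemma traj_preimage_singleton (hτs : ∀ n ω, τ (n + 1) ω = s (n + 1) ω * τ n ω)
    (a n : ℕ) (w : Fin (n + 1) → Fin d → ℤ) :
    traj τ a n ⁻¹' {w} =
      {ω | τ a ω 0 = w 0} ∩ pathEvent s a n fun j => w (Fin.clamp (j - a) n) := by
  ext ω
  have hstep : ∀ i, s (i + 1) ω (τ i ω 0) = τ (i + 1) ω 0 := fun i => by
    rw [hτs, Equiv.Perm.mul_apply]
  have hclamp : ∀ j (hj : j ≤ n), Fin.clamp j n = ⟨j, Nat.lt_succ_of_le hj⟩ := fun j hj => by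
    ext; simp [Fin.coe_clamp, hj]
  simp only [Set.mem_preimage, Set.mem_singleton_iff, Set.mem_inter_iff, pathEvent,
    Set.mem_iInter₂, Finset.mem_Ico, Set.mem_ofPred_eq]
  constructor
  · rintro rfl
    refine ⟨by simp [traj], fun i hi => ?_⟩
    rw [hclamp _ (by omega), hclamp _ (by omega)]
    simp only [traj]
    rw [show a + (i - a) = i by omega, show a + (i + 1 - a) = i + 1 by omega, hstep]
  · rintro ⟨h0, h⟩
    have hτw : ∀ j ≤ n, τ (a + j) ω 0 = w (Fin.clamp j n) := by
      intro j hj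
      induction j with
      | zero => simpa [hclamp 0 (Nat.zero_le n)] using h0
      | succ j ih =>
        have := h (a + j) (by omega)
        rw [Nat.add_sub_cancel_left, show a + j + 1 - a = j + 1 by omega] at this
        rw [← add_assoc, ← hstep, ih (by omega), this]
    funext j
    rw [traj, hτw j (Nat.le_of_lt_succ j.2), hclamp j (Nat.le_of_lt_succ j.2)]

lemma dist1_le_mul_of_steps (hτs : ∀ n ω, τ (n + 1) ω = s (n + 1) ω * τ n ω) {M : ℕ}
    (hM : ∀ (i : ℕ) (ω : Ω) (x : Fin d → ℤ), dist1 x (s i ω x) ≤ M) (ω : Ω) (a r : ℕ) :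
    dist1 (τ a ω 0) (τ (a + r) ω 0) ≤ r * M := by
  induction r with
  | zero => simp [dist1]
  | succ r ih =>
    calc dist1 (τ a ω 0) (τ (a + r + 1) ω 0)
        ≤ dist1 (τ a ω 0) (τ (a + r) ω 0) + dist1 (τ (a + r) ω 0) (τ (a + r + 1) ω 0) :=
          dist1_triangle _ _ _
      _ ≤ r * M + M := add_le_add ih (by rw [hτs, Equiv.Perm.mul_apply]; exact hM _ _ _)
      _ = (r + 1) * M := (Nat.succ_mul r M).symm

lemma dist1_le_of_mem_returnEvent (hτs : ∀ n ω, τ (n + 1) ω = s (n + 1) ω * τ n ω) {M : ℕ}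
    (hM : ∀ (i : ℕ) (ω : Ω) (x : Fin d → ℤ), dist1 x (s i ω x) ≤ M) {l N : ℕ} (hl : 0 < l)
    {ω : Ω} (hω : ω ∈ returnEvent τ l N) {j : ℕ} (hj : j ≤ l * N) :
    dist1 0 (τ j ω 0) ≤ l * M := by
  have := dist1_le_mul_of_steps hτs hM ω (l * (j / l)) (j % l)
  rw [Nat.div_add_mod, hω _ (Nat.div_le_of_le_mul hj)] at this
  exact this.trans (Nat.mul_le_mul_right M (Nat.mod_lt j hl).le)

lemma ncard_orbit_le_of_mem_returnEvent (hτs : ∀ n ω, τ (n + 1) ω = s (n + 1) ω * τ n ω)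
    {M : ℕ} (hM : ∀ (i : ℕ) (ω : Ω) (x : Fin d → ℤ), dist1 x (s i ω x) ≤ M) {l N m : ℕ}
    (hl : 0 < l) (hm : m ≤ l * N) {ω : Ω} (hω : ω ∈ returnEvent τ l N) :
    {x | ∃ j ≤ m, x = τ j ω 0}.ncard ≤ {y : Fin d → ℤ | dist1 0 y ≤ l * M}.ncard := by
  refine Set.ncard_le_ncard ?_ (finite_setOf_dist1_le 0 _)
  rintro _ ⟨j, hj, rfl⟩
  exact dist1_le_of_mem_returnEvent hτs hM hl hω (hj.trans hm)

variable [MeasurableSpace Ω] {μ : Measure Ω}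

lemma measure_pathEvent
    (hindep : iIndepFun (m := fun _ => (⊤ : MeasurableSpace (Equiv.Perm (Fin d → ℤ)))) s μ)
    (hident : ∀ (i : ℕ) (A : Set (Equiv.Perm (Fin d → ℤ))),
      μ {ω | s i ω ∈ A} = μ {ω | s 0 ω ∈ A})
    (a n : ℕ) (γ : ℕ → Fin d → ℤ) :
    μ (pathEvent s a n γ) =
      ∏ i ∈ Finset.Ico a (a + n), μ {ω | s 0 ω (γ i) = γ (i + 1)} := by
  rw [pathEvent, (hindep.precomp (add_left_injective 1)).measure_inter_preimage_eq_mul _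
    fun _ _ => MeasurableSpace.measurableSet_top]
  exact Finset.prod_congr rfl fun i _ => hident (i + 1) _

lemma measure_pathEvent_eq_shift
    (hindep : iIndepFun (m := fun _ => (⊤ : MeasurableSpace (Equiv.Perm (Fin d → ℤ)))) s μ)
    (hident : ∀ (i : ℕ) (A : Set (Equiv.Perm (Fin d → ℤ))),
      μ {ω | s i ω ∈ A} = μ {ω | s 0 ω ∈ A})
    (a n : ℕ) (γ : ℕ → Fin d → ℤ) :
    μ (pathEvent s a n γ) = μ (pathEvent s 0 n fun j => γ (j + a)) := by
  rw [measure_pathEvent hindep hident, measure_pathEvent hindep hident, zero_add]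
  simp only [Nat.add_right_comm _ 1 a]
  rw [Finset.prod_Ico_add' (fun i => μ {ω | s 0 ω (γ i) = γ (i + 1)}), zero_add, add_comm n]

lemma measure_pathEvent_inter
    (hindep : iIndepFun (m := fun _ => (⊤ : MeasurableSpace (Equiv.Perm (Fin d → ℤ)))) s μ)
    (a m n : ℕ) (σ β : ℕ → Fin d → ℤ) :
    μ (pathEvent s a m σ ∩ pathEvent s (a + m) n β) =
      μ (pathEvent s a m σ) * μ (pathEvent s (a + m) n β) :=
  (hindep.precomp (add_left_injective 1)).measure_biInter_preimage_inter
    (Finset.Ico_disjoint_Ico_consecutive _ _ _) (fun _ _ => MeasurableSpace.measurableSet_top)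
    (fun _ _ => MeasurableSpace.measurableSet_top)

lemma measurable_traj (hmeasτ : ∀ (n : ℕ) (x : Fin d → ℤ), Measurable fun ω => τ n ω x)
    (a n : ℕ) : Measurable (traj τ a n) :=
  measurable_pi_lambda _ fun _ => hmeasτ _ 0

lemma measure_traj_preimage_singleton_inter
    (hτ0 : ∀ ω, τ 0 ω = 1) (hτs : ∀ n ω, τ (n + 1) ω = s (n + 1) ω * τ n ω)
    (hindep : iIndepFun (m := fun _ => (⊤ : MeasurableSpace (Equiv.Perm (Fin d → ℤ)))) s μ)
    (hident : ∀ (i : ℕ) (A : Set (Equiv.Perm (Fin d → ℤ))),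
      μ {ω | s i ω ∈ A} = μ {ω | s 0 ω ∈ A})
    {L n : ℕ} {v : Fin (L + 1) → Fin d → ℤ} (hv : v (Fin.last L) = 0)
    (u : Fin (n + 1) → Fin d → ℤ) :
    μ (traj τ 0 L ⁻¹' {v} ∩ traj τ L n ⁻¹' {u}) =
      μ (traj τ 0 L ⁻¹' {v}) * μ (traj τ 0 n ⁻¹' {u}) := by
  have hτ00 : ∀ ω, τ 0 ω 0 = 0 := fun ω => by simp [hτ0]
  have hτL : ∀ ω ∈ traj τ 0 L ⁻¹' {v}, τ L ω 0 = 0 := fun ω hω => by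
    simpa [traj, hv] using congrFun hω (Fin.last L)
  rw [traj_preimage_singleton hτs L n u, traj_preimage_singleton hτs 0 n u]
  obtain hu | hu := ne_or_eq (u 0) 0
  · have : traj τ 0 L ⁻¹' {v} ∩ {ω | τ L ω 0 = u 0} = ∅ :=
      Set.eq_empty_of_forall_notMem fun ω hω => hu (hω.2.symm.trans (hτL ω hω.1))
    simp [← Set.inter_assoc, this, hτ00, Ne.symm hu]
  have hτLu : traj τ 0 L ⁻¹' {v} ⊆ {ω | τ L ω 0 = u 0} := fun ω hω => (hτL ω hω).trans hu.symm
  rw [← Set.inter_assoc, Set.inter_eq_left.2 hτLu, traj_preimage_singleton hτs 0 L v]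
  by_cases hv0 : v 0 = 0
  · simp only [hτ00, hu, hv0, Set.ofPred_true, Set.univ_inter, Nat.sub_zero]
    have := measure_pathEvent_inter (μ := μ) hindep 0 L n
      (fun j => v (Fin.clamp j L)) (fun j => u (Fin.clamp (j - L) n))
    rw [zero_add] at this
    rw [this, measure_pathEvent_eq_shift hindep hident L n]
    simp only [Nat.add_sub_cancel]
  · simp [hτ00, Ne.symm hv0]

lemma measure_traj_preimage_inter
    (hτ0 : ∀ ω, τ 0 ω = 1) (hτs : ∀ n ω, τ (n + 1) ω = s (n + 1) ω * τ n ω)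
    (hmeasτ : ∀ (n : ℕ) (x : Fin d → ℤ), Measurable fun ω => τ n ω x)
    (hindep : iIndepFun (m := fun _ => (⊤ : MeasurableSpace (Equiv.Perm (Fin d → ℤ)))) s μ)
    (hident : ∀ (i : ℕ) (A : Set (Equiv.Perm (Fin d → ℤ))),
      μ {ω | s i ω ∈ A} = μ {ω | s 0 ω ∈ A})
    {L n : ℕ} {S : Set (Fin (L + 1) → Fin d → ℤ)} (hS : ∀ v ∈ S, v (Fin.last L) = 0)
    (U : Set (Fin (n + 1) → Fin d → ℤ)) :
    μ (traj τ 0 L ⁻¹' S ∩ traj τ L n ⁻¹' U) = μ (traj τ 0 L ⁻¹' S) * μ (traj τ 0 n ⁻¹' U) := by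
  have hfib : ∀ a n (W : Set (Fin (n + 1) → Fin d → ℤ)) (E : Set Ω),
      μ (traj τ a n ⁻¹' W ∩ E) = ∑' w : W, μ (traj τ a n ⁻¹' {w.1} ∩ E) :=
    fun a n W E => measure_preimage_inter_eq_tsum (measurable_traj hmeasτ a n) W E
  calc μ (traj τ 0 L ⁻¹' S ∩ traj τ L n ⁻¹' U)
      = ∑' v : S, ∑' u : U, μ (traj τ 0 L ⁻¹' {v.1} ∩ traj τ L n ⁻¹' {u.1}) := by
        simp only [hfib 0 L S, Set.inter_comm (traj τ 0 L ⁻¹' {_}), hfib L n U]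
    _ = ∑' v : S, ∑' u : U, μ (traj τ 0 L ⁻¹' {v.1}) * μ (traj τ 0 n ⁻¹' {u.1}) := by
        refine tsum_congr fun v => tsum_congr fun u => ?_
        exact measure_traj_preimage_singleton_inter hτ0 hτs hindep hident (hS v v.2) u.1
    _ = μ (traj τ 0 L ⁻¹' S) * μ (traj τ 0 n ⁻¹' U) := by
        have hsing : ∀ a n (w : Fin (n + 1) → Fin d → ℤ), MeasurableSet (traj τ a n ⁻¹' {w}) :=
          fun a n w => measurable_traj hmeasτ a n (measurableSet_singleton w)
        simp only [ENNReal.tsum_mul_left, ENNReal.tsum_mul_right]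
        rw [tsum_measure_preimage_singleton S.to_countable fun v _ => hsing 0 L v,
          tsum_measure_preimage_singleton U.to_countable fun u _ => hsing 0 n u]

lemma measure_returnEvent [IsProbabilityMeasure μ]
    (hτ0 : ∀ ω, τ 0 ω = 1) (hτs : ∀ n ω, τ (n + 1) ω = s (n + 1) ω * τ n ω)
    (hmeasτ : ∀ (n : ℕ) (x : Fin d → ℤ), Measurable fun ω => τ n ω x)
    (hindep : iIndepFun (m := fun _ => (⊤ : MeasurableSpace (Equiv.Perm (Fin d → ℤ)))) s μ)
    (hident : ∀ (i : ℕ) (A : Set (Equiv.Perm (Fin d → ℤ))),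
      μ {ω | s i ω ∈ A} = μ {ω | s 0 ω ∈ A})
    (l N : ℕ) : μ (returnEvent τ l N) = μ {ω | τ l ω 0 = 0} ^ N := by
  induction N with
  | zero => simp [returnEvent, hτ0]
  | succ N ih =>
    set S : Set (Fin (l * N + 1) → Fin d → ℤ) :=
      {v | ∀ i ≤ N, v (Fin.clamp (l * i) (l * N)) = 0}
    set U : Set (Fin (l + 1) → Fin d → ℤ) := {u | u (Fin.last l) = 0}
    have hS : returnEvent τ l N = traj τ 0 (l * N) ⁻¹' S := by
      ext ω
      simp only [returnEvent, traj, S, Set.mem_preimage, Set.mem_ofPred_eq, Fin.coe_clamp,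
        zero_add]
      exact forall₂_congr fun i hi => by rw [min_eq_left (Nat.mul_le_mul_left l hi)]
    have hU : {ω | τ l ω 0 = 0} = traj τ 0 l ⁻¹' U := by
      ext ω
      simp [traj, U]
    have hstep : returnEvent τ l (N + 1) = returnEvent τ l N ∩ traj τ (l * N) l ⁻¹' U := by
      ext ω
      simp [returnEvent, traj, U, Nat.le_succ_iff, or_imp, forall_and, mul_add]
    have hSlast : ∀ v ∈ S, v (Fin.last (l * N)) = 0 := fun v hv => by
      rw [← hv N le_rfl]
      congr
      ext
      simp
    rw [hstep, hS, measure_traj_preimage_inter hτ0 hτs hmeasτ hindep hident hSlast, ← hS, ← hU,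
      ih, pow_succ]

lemma eventually_exp_neg_mul_le_measure_ncard_orbit_le [IsProbabilityMeasure μ]
    (hindep : iIndepFun (m := fun _ => (⊤ : MeasurableSpace (Equiv.Perm (Fin d → ℤ)))) s μ)
    (hident : ∀ (i : ℕ) (A : Set (Equiv.Perm (Fin d → ℤ))),
      μ {ω | s i ω ∈ A} = μ {ω | s 0 ω ∈ A})
    {M : ℕ} (hM : ∀ (i : ℕ) (ω : Ω) (x : Fin d → ℤ), dist1 x (s i ω x) ≤ M)
    (hτ0 : ∀ ω, τ 0 ω = 1) (hτs : ∀ n ω, τ (n + 1) ω = s (n + 1) ω * τ n ω)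
    (hmeasτ : ∀ (n : ℕ) (x : Fin d → ℤ), Measurable fun ω => τ n ω x)
    {c : ℝ} (hc : 0 < c)
    (hheat : ∀ k : ℕ, 1 ≤ k →
      ENNReal.ofReal (c * (k : ℝ) ^ (-(d : ℝ) / 2)) ≤ μ {ω | τ (2 * k) ω 0 = 0})
    {ε : ℝ} (hε : 0 < ε) :
    ∀ᶠ m : ℕ in atTop, ENNReal.ofReal (Real.exp (-ε * m))
      ≤ μ {ω | ({x | ∃ j ≤ m, x = τ j ω 0}.ncard : ℝ) ≤ ε * m} := by
  obtain ⟨k, hk, hkc⟩ := exists_exp_neg_mul_le_mul_rpow d hc hε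
  have hl : 0 < 2 * k := by omega
  set C := {y | dist1 0 y ≤ 2 * k * M}.ncard
  filter_upwards [eventually_ge_atTop (2 * k),
    (tendsto_natCast_atTop_atTop.const_mul_atTop hε).eventually_ge_atTop (C : ℝ)] with m hm hmC
  have hmN : m ≤ 2 * k * (m / (2 * k) + 1) := (Nat.lt_mul_div_succ m hl).le
  have hkN : k * (m / (2 * k) + 1) ≤ m := by
    have := Nat.div_mul_le_self m (2 * k)
    nlinarith
  set N := m / (2 * k) + 1
  have hrange : returnEvent τ (2 * k) N ⊆ {ω | ({x | ∃ j ≤ m, x = τ j ω 0}.ncard : ℝ) ≤ ε * m} :=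
    fun ω hω => (Nat.cast_le.2 (ncard_orbit_le_of_mem_returnEvent hτs hM hl hmN hω)).trans hmC
  calc ENNReal.ofReal (Real.exp (-ε * m))
      ≤ ENNReal.ofReal (Real.exp (-ε * k)) ^ N := by
        rw [← ENNReal.ofReal_pow (Real.exp_pos _).le, ← Real.exp_nat_mul]
        refine ENNReal.ofReal_le_ofReal (Real.exp_le_exp.2 ?_)
        have : ((k * N : ℕ) : ℝ) ≤ m := by exact_mod_cast hkN
        push_cast at this
        nlinarith
    _ ≤ μ {ω | τ (2 * k) ω 0 = 0} ^ N := by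
        gcongr
        exact (ENNReal.ofReal_le_ofReal hkc).trans (hheat k hk)
    _ = μ (returnEvent τ (2 * k) N) :=
        (measure_returnEvent hτ0 hτs hmeasτ hindep hident (2 * k) N).symm
    _ ≤ _ := measure_mono hrange

end PermutationWalk

/-- For `τ_n = s_n ∘ ⋯ ∘ s_1` with `s_i` i.i.d. permutations of `ℤ^d` of range `≤ M`, the
forward orbit `O⃗_n = ⋃_{0≤j≤n} τ_j({0})` equals the range `{Y_0, …, Y_n}` of the chain
`Y_j = τ_j(0)`; hence `|O⃗_n| ≤ n + 1`, and if `P_0(Y_{2k} = 0) ≥ c k^{−d/2}` for all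
`k ≥ 1`, then for every `ε > 0`, `P(|O⃗_n| ≤ εn) ≥ e^{−εn}` for `n` large enough. -/
theorem stmt17 {d : ℕ} {Ω : Type*} [MeasurableSpace Ω] (μ : Measure Ω)
    [IsProbabilityMeasure μ]
    (s : ℕ → Ω → Equiv.Perm (Fin d → ℤ))
    (hindep : iIndepFun (m := fun _ => (⊤ : MeasurableSpace (Equiv.Perm (Fin d → ℤ)))) s μ)
    (hident : ∀ (i : ℕ) (A : Set (Equiv.Perm (Fin d → ℤ))),
      μ {ω | s i ω ∈ A} = μ {ω | s 0 ω ∈ A})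
    (M : ℕ) (hM : ∀ (i : ℕ) (ω : Ω) (x : Fin d → ℤ), dist1 x (s i ω x) ≤ M)
    (τ : ℕ → Ω → Equiv.Perm (Fin d → ℤ))
    (hτ0 : ∀ ω, τ 0 ω = 1) (hτs : ∀ n ω, τ (n + 1) ω = s (n + 1) ω * τ n ω)
    (hmeasτ : ∀ (n : ℕ) (x : Fin d → ℤ), Measurable fun ω => τ n ω x)
    (c : ℝ) (hc : 0 < c)
    (hheat : ∀ k : ℕ, 1 ≤ k →
      ENNReal.ofReal (c * (k : ℝ) ^ (-(d : ℝ) / 2)) ≤ μ {ω | τ (2 * k) ω 0 = 0}) :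
    (∀ (m : ℕ) (ω : Ω), {x | ∃ j ≤ m, x = τ j ω 0} = (fun j => τ j ω 0) '' Set.Iic m) ∧
      (∀ (m : ℕ) (ω : Ω), {x | ∃ j ≤ m, x = τ j ω 0}.ncard ≤ m + 1) ∧
      ∀ ε > (0 : ℝ), ∀ᶠ m : ℕ in atTop,
        ENNReal.ofReal (Real.exp (-ε * m))
          ≤ μ {ω | ({x | ∃ j ≤ m, x = τ j ω 0}.ncard : ℝ) ≤ ε * m} :=
  ⟨fun m _ => setOf_exists_le_eq_image _ m, fun m _ => ncard_setOf_exists_le_le _ m,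
    fun _ hε => eventually_exp_neg_mul_le_measure_ncard_orbit_le hindep hident hM hτ0 hτs hmeasτ
      hc hheat hε⟩
end
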